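/- arXiv:1910.08163 — 3 statements merged into one kernel-verified Lean document; each statement's English description precedes it below -/
import Mathlib

section
/- Let I be a nonempty finite set and a : I × I → ℤ. Let S := { x : I → ℤ | x(i) − x(j) ≥ a(i,i) − a(i,j) for all i, j ∈ I }. Then S is integrally tropically convex: for all x, y ∈ S and all integers c, d, the function i ↦ min(c + x(i), d + y(i)) again lies in S. -/
/-!
Each defining inequality `b i j ≤ x i - x j` only involves differences, so it survives adding a
constant to `x`; and if `m = min (x j) (y j)`, then `x i ≥ x j + b i j ≥ m + b i j` and likewise for
`y i`, so it also survives taking the pointwise minimum.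
-/

section DiffBoundedSet

variable {I α : Type*}

def diffBoundedSet [Sub α] [LE α] (b : I → I → α) : Set (I → α) :=
  {x | ∀ i j, b i j ≤ x i - x j}

variable {b : I → I → α} {x y : I → α}

theorem const_add_mem_diffBoundedSet [AddCommGroup α] [LE α] (hx : x ∈ diffBoundedSet b)
    (c : α) :
    (fun i => c + x i) ∈ diffBoundedSet b := by
  intro i j
  simpa only [add_sub_add_left_eq_sub] using hx i j

theorem min_mem_diffBoundedSet [AddCommGroup α] [LinearOrder α] [IsOrderedAddMonoid α]
    (hx : x ∈ diffBoundedSet b) (hy : y ∈ diffBoundedSet b) :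
    (fun i => min (x i) (y i)) ∈ diffBoundedSet b := by
  intro i j
  rw [le_sub_iff_add_le']
  exact le_min
    ((add_le_add_left (min_le_left _ _) _).trans (le_sub_iff_add_le'.mp (hx i j)))
    ((add_le_add_left (min_le_right _ _) _).trans (le_sub_iff_add_le'.mp (hy i j)))

end DiffBoundedSet

theorem statement6_general {I : Type*} (a : I → I → ℤ)
    (S : Set (I → ℤ)) (hS : S = {x : I → ℤ | ∀ i j, a i i - a i j ≤ x i - x j})
    (x y : I → ℤ) (hx : x ∈ S) (hy : y ∈ S) (c d : ℤ) :
    (fun i => min (c + x i) (d + y i)) ∈ S := by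
  change S = diffBoundedSet (fun i j => a i i - a i j) at hS
  subst hS
  exact min_mem_diffBoundedSet (const_add_mem_diffBoundedSet hx c)
    (const_add_mem_diffBoundedSet hy d)

theorem statement6 {I : Type*} [Fintype I] [Nonempty I] (a : I → I → ℤ)
    (S : Set (I → ℤ)) (hS : S = {x : I → ℤ | ∀ i j, a i i - a i j ≤ x i - x j})
    (x y : I → ℤ) (hx : x ∈ S) (hy : y ∈ S) (c d : ℤ) :
    (fun i => min (c + x i) (d + y i)) ∈ S :=
  statement6_general a S hS x y hx hy c d
end

section
/- Let I be a nonempty finite set and a : I × I → ℤ, and let S := { x : I → ℤ | x(i) − x(j) ≥ a(i,i) − a(i,j) for all i, j ∈ I }. Then every x ∈ S satisfies, for every j ∈ I, x(j) = min over i ∈ I of ( x(i) − a(i,i) + a(i,j) ). In particular every element of S is an integral tropical combination of the rows a(i,·) of a, i.e. S is contained in { j ↦ min over i ∈ I of (c(i) + a(i,j)) : c : I → ℤ }. -/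
open Finset

theorem eq_inf'_sub_add_of_sub_le {ι α : Type*} [AddCommGroup α] [LinearOrder α]
    [IsOrderedAddMonoid α] {s : Finset ι} (a : ι → ι → α) (x : ι → α)
    (hx : ∀ i ∈ s, ∀ j ∈ s, a i i - a i j ≤ x i - x j) {j : ι} (hj : j ∈ s) :
    x j = s.inf' ⟨j, hj⟩ (fun i => x i - a i i + a i j) :=
  le_antisymm
    (le_inf' _ _ fun i hi => sub_add (x i) (a i i) (a i j) ▸ le_sub_comm.mpr (hx i hi j hj))
    ((inf'_le _ hj).trans_eq (sub_add_cancel _ _))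

theorem statement7 {I : Type*} [Fintype I] [Nonempty I] (a : I → I → ℤ)
    (x : I → ℤ) (hx : ∀ i j, a i i - a i j ≤ x i - x j) :
    (∀ j, x j = Finset.univ.inf' Finset.univ_nonempty (fun i => x i - a i i + a i j)) ∧
    (∃ c : I → ℤ, ∀ j,
      x j = Finset.univ.inf' Finset.univ_nonempty (fun i => c i + a i j)) := by
  have hmin : ∀ j, x j = univ.inf' univ_nonempty (fun i => x i - a i i + a i j) := fun j =>
    eq_inf'_sub_add_of_sub_le a x (fun i _ j _ => hx i j) (mem_univ j)
  exact ⟨hmin, fun i => x i - a i i, hmin⟩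
end

section
/- Let I be a nonempty finite set and a : I × I → ℤ. Let S := { x : I → ℤ | x(i) − x(j) ≥ a(i,i) − a(i,j) for all i, j ∈ I } and let H := { j ↦ min over i ∈ I of (c(i) + a(i,j)) : c : I → ℤ } be the set of integral tropical combinations of the rows of a. Then S = H if and only if a(k,i) − a(k,j) ≥ a(i,i) − a(i,j) for all i, j, k ∈ I. -/
/-!
The condition says that every row `a k` lies in `S`. Every row also lies in `H`, as the
combination with `c i = max_j (a k j - a i j)`, which vanishes at `i = k`; so `S = H` forces the
condition. Conversely, every `x ∈ S` is the combination with `c i = x i - a i i`, and a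
combination `x` of rows lying in `S` lies in `S`: if row `m` realizes the minimum at `i`, then
`x i - x j ≥ a m i - a m j ≥ a i i - a i j`.
-/

open Finset

section TropicalCombination

variable {I G : Type*} [Fintype I] [Nonempty I]
  [AddCommGroup G] [LinearOrder G] [IsOrderedAddMonoid G]

theorem exists_inf'_add_eq_row (a : I → I → G) (k : I) :
    ∃ c : I → G, ∀ j, univ.inf' univ_nonempty (fun i => c i + a i j) = a k j := by
  refine ⟨fun i => univ.sup' univ_nonempty (fun j => a k j - a i j), fun j => le_antisymm ?_ ?_⟩
  · calc univ.inf' univ_nonempty (fun i => univ.sup' univ_nonempty (fun j => a k j - a i j) + a i j)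
        ≤ univ.sup' univ_nonempty (fun j => a k j - a k j) + a k j := inf'_le _ (mem_univ k)
      _ = a k j := by simp only [sub_self, sup'_const, zero_add]
  · refine le_inf' _ _ fun i _ => ?_
    exact sub_le_iff_le_add.mp (le_sup' (fun j => a k j - a i j) (mem_univ j))

theorem inf'_sub_diag_add_eq {a : I → I → G} {x : I → G}
    (hx : ∀ i j, a i i - a i j ≤ x i - x j) (j : I) :
    univ.inf' univ_nonempty (fun i => x i - a i i + a i j) = x j := by
  refine le_antisymm ((inf'_le _ (mem_univ j)).trans_eq (sub_add_cancel _ _)) ?_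
  refine le_inf' _ _ fun i _ => ?_
  rw [sub_add_eq_add_sub, le_sub_iff_add_le']
  exact sub_le_sub_iff.mp (hx i j)

theorem sub_le_sub_of_eq_inf'_add {a : I → I → G} {c x : I → G}
    (ha : ∀ i j k, a i i - a i j ≤ a k i - a k j)
    (hx : ∀ j, x j = univ.inf' univ_nonempty (fun i => c i + a i j)) (i j : I) :
    a i i - a i j ≤ x i - x j := by
  obtain ⟨m, -, hm⟩ := exists_mem_eq_inf' (univ_nonempty (α := I)) (fun k => c k + a k i)
  have hxj : x j ≤ c m + a m j := (hx j).trans_le (inf'_le _ (mem_univ m))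
  calc a i i - a i j ≤ a m i - a m j := ha i j m
    _ = (c m + a m i) - (c m + a m j) := (add_sub_add_left_eq_sub _ _ _).symm
    _ ≤ x i - x j := by rw [hx i, hm]; exact sub_le_sub_left hxj _

end TropicalCombination

theorem statement8 {I : Type*} [Fintype I] [Nonempty I] (a : I → I → ℤ) :
    ({x : I → ℤ | ∀ i j, a i i - a i j ≤ x i - x j} =
      {x : I → ℤ | ∃ c : I → ℤ, ∀ j,
        x j = Finset.univ.inf' Finset.univ_nonempty (fun i => c i + a i j)}) ↔
    (∀ i j k, a i i - a i j ≤ a k i - a k j) := by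
  constructor
  · intro hSH i j k
    obtain ⟨c, hc⟩ := exists_inf'_add_eq_row a k
    have hrow : a k ∈ {x : I → ℤ | ∀ i j, a i i - a i j ≤ x i - x j} :=
      hSH ▸ ⟨c, fun j => (hc j).symm⟩
    exact hrow i j
  · intro ha
    ext x
    constructor
    · intro hx
      exact ⟨fun i => x i - a i i, fun j => (inf'_sub_diag_add_eq hx j).symm⟩
    · rintro ⟨c, hc⟩
      exact sub_le_sub_of_eq_inf'_add ha hc
end
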